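/- arXiv:2409.06974 — 3 statements merged into one kernel-verified Lean document; each statement's English description precedes it below -/
import Mathlib

section
/- Let α be a finite alphabet with two distinct letters a and b. The language L₁ = {a^n·b : n ≥ 0} is a right-sided comet but not a left-sided comet, and its reversal L₂ = {b·a^n : n ≥ 0} is a left-sided comet but not a right-sided comet. -/
open Language Computability

universe u

variable {α : Type}

/-- The n-fold repetition (power) of a word. -/
def wordPow (y : List α) : ℕ → List α
  | 0 => []
  | n + 1 => y ++ wordPow y n

/-- A star language: the Kleene star of some regular language. -/
def IsStarLang (L : Language α) : Prop :=
  ∃ H : Language α, H.IsRegular ∧ L = H∗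

/-- A left-sided comet. -/
def IsLeftComet (L : Language α) : Prop :=
  ∃ E G : Language α, E.IsRegular ∧ G.IsRegular ∧ G ≠ 0 ∧ G ≠ 1 ∧ L = E * G∗

/-- A right-sided comet. -/
def IsRightComet (L : Language α) : Prop :=
  ∃ G H : Language α, G.IsRegular ∧ H.IsRegular ∧ G ≠ 0 ∧ G ≠ 1 ∧ L = G∗ * H

/-- A two-sided comet. -/
def IsTwoComet (L : Language α) : Prop :=
  ∃ E G H : Language α, E.IsRegular ∧ G.IsRegular ∧ H.IsRegular ∧
    G ≠ 0 ∧ G ≠ 1 ∧ L = E * G∗ * H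

/-- A regular expression is union-free if it is built from the atoms `0` (empty language)
and single letters using only concatenation and Kleene star. -/
def RegularExpression.UnionFree : RegularExpression α → Prop
  | RegularExpression.zero => True
  | RegularExpression.epsilon => False
  | RegularExpression.char _ => True
  | RegularExpression.plus _ _ => False
  | RegularExpression.comp r s => r.UnionFree ∧ s.UnionFree
  | RegularExpression.star r => r.UnionFree

/-- A union-free language: the language of a union-free regular expression. -/
def IsUnionFree (L : Language α) : Prop :=
  ∃ r : RegularExpression α, r.UnionFree ∧ r.matches' = L

/-- A monoidal language. -/
def IsMonoidal (L : Language α) : Prop := L = (⊤ : Language α)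

/-- The language of one-letter words with letters from `X`. -/
def lettersLang (X : Set α) : Language α := {w : List α | ∃ a ∈ X, w = [a]}

/-- A combinational language: `⊤ · X` for a set `X` of one-letter words. -/
def IsCombinational (L : Language α) : Prop :=
  ∃ X : Set α, L = (⊤ : Language α) * lettersLang X

/-- A symmetric definite language: `E · ⊤ · H` with `E, H` regular. -/
def IsSymDef (L : Language α) : Prop :=
  ∃ E H : Language α, E.IsRegular ∧ H.IsRegular ∧ L = E * (⊤ : Language α) * H

/-- A nilpotent language: finite or with finite complement. -/
def IsNilpotentLang (L : Language α) : Prop := L.Finite ∨ (Lᶜ : Language α).Finite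

/-- A definite language: `A ∪ ⊤ · B` with `A, B` finite. -/
def IsDefinite (L : Language α) : Prop :=
  ∃ A B : Language α, A.Finite ∧ B.Finite ∧ L = A + (⊤ : Language α) * B  -- `+` of languages is union

/-- An ordered language: accepted by a DFA with linearly ordered state set
whose transition maps are all monotone. -/
def IsOrdered (L : Language α) : Prop :=
  ∃ (σ : Type) (_ : Fintype σ) (_ : LinearOrder σ) (M : DFA α σ),
    (∀ a : α, Monotone fun q => M.step q a) ∧ M.accepts = L

/-- The non-counting property. -/
def HasNonCounting (L : Language α) : Prop :=
  ∃ k : ℕ, 1 ≤ k ∧ ∀ x y z : List α,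
    (x ++ wordPow y k ++ z ∈ L ↔ x ++ wordPow y (k + 1) ++ z ∈ L)

/-- A non-counting (star-free) regular language. -/
def IsNonCounting (L : Language α) : Prop := L.IsRegular ∧ HasNonCounting L

/-- The power-separating property. -/
def HasPowerSep (L : Language α) : Prop :=
  ∃ m : ℕ, 1 ≤ m ∧ ∀ x : List α,
    (∀ n, m ≤ n → wordPow x n ∉ L) ∨ (∀ n, m ≤ n → wordPow x n ∈ L)

/-- A power-separating regular language. -/
def IsPowerSep (L : Language α) : Prop := L.IsRegular ∧ HasPowerSep L

/-- A suffix-closed (regular) language. -/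
def IsSuffixClosed (L : Language α) : Prop :=
  L.IsRegular ∧ ∀ x y : List α, x ++ y ∈ L → y ∈ L

/-- A circular (regular) language. -/
def IsCircular (L : Language α) : Prop :=
  L.IsRegular ∧ ∀ u v : List α, u ++ v ∈ L → v ++ u ∈ L

/-- A commutative (regular) language. -/
def IsCommutative (L : Language α) : Prop :=
  L.IsRegular ∧ ∀ w ∈ L, ∀ v : List α, w.Perm v → v ∈ L

/-- The reversal of a language. -/
def Reversal (L : Language α) : Language α := {w : List α | ∃ v ∈ L, w = v.reverse}

/-- Two families of languages are incomparable if neither is contained in the other. -/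
def Incomparable (P Q : Language α → Prop) : Prop :=
  (∃ L : Language α, P L ∧ ¬ Q L) ∧ (∃ L : Language α, Q L ∧ ¬ P L)

/-- A finite language. -/
def IsFiniteLang (L : Language α) : Prop := L.Finite

/-- The language `{aⁿb : n ≥ 0}`. -/
def anb (a b : α) : Language α := {w : List α | ∃ n : ℕ, w = List.replicate n a ++ [b]}

/-- The language `{b·aⁿ : n ≥ 0}`, the reversal of `anb`. -/
def ban (a b : α) : Language α := {w : List α | ∃ n : ℕ, w = b :: List.replicate n a}

/-!
A left-sided comet `E · G∗` absorbs a further factor from `G` on the right, and `G` contains a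
nonempty word; so every word of a left-sided comet has a proper extension on the right inside the
language, and dually every word of a right-sided comet has a proper extension on the left. The
word `b` of `{aⁿb}` admits no proper right extension, and the word `b` of `{baⁿ}` no proper left
extension. The positive halves are the factorisations `{aⁿb} = a∗ · b` and `{baⁿ} = b · a∗`.
-/

namespace Language

variable {β : Type*}

theorem IsRegular.of_finite {L : Language β} (hL : L.Finite) : L.IsRegular := by
  refine IsRegular.of_finite_range_leftQuotient ?_
  -- every left quotient is a set of suffixes of words of `L`
  have hsuffixes : (⋃ w ∈ L, {v | v ∈ w.tails}).Finite :=
    hL.biUnion fun w _ => w.tails.finite_toSet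
  refine hsuffixes.finite_subsets.subset ?_
  rintro _ ⟨x, rfl⟩ v hv
  exact Set.mem_biUnion hv ((List.mem_tails _ _).mpr (List.suffix_append x v))

theorem isRegular_singleton (w : List β) : ({w} : Language β).IsRegular :=
  IsRegular.of_finite (Set.finite_singleton w)

theorem singleton_ne_zero (w : List β) : ({w} : Language β) ≠ 0 :=
  Set.singleton_ne_empty w

theorem singleton_ne_one {w : List β} (hw : w ≠ []) : ({w} : Language β) ≠ 1 :=
  fun h => hw (Set.singleton_eq_singleton_iff.mp h)

theorem exists_mem_ne_nil {G : Language β} (h0 : G ≠ 0) (h1 : G ≠ 1) : ∃ g ∈ G, g ≠ [] := by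
  by_contra! h
  obtain ⟨g, hg⟩ := Set.nonempty_iff_ne_empty.mpr h0
  exact h1 (Set.eq_singleton_iff_unique_mem.mpr ⟨h g hg ▸ hg, h⟩)

theorem mem_kstar_singleton_char {c : β} {x : List β} :
    x ∈ ({[c]} : Language β)∗ ↔ ∃ n, x = List.replicate n c := by
  constructor
  · rintro ⟨L, rfl, hL⟩
    rw [List.eq_replicate_iff.mpr ⟨rfl, hL⟩]
    exact ⟨L.length, by simp⟩
  · rintro ⟨n, rfl⟩
    simpa using join_mem_kstar (l := {[c]}) fun y hy => List.eq_of_mem_replicate hy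

end Language

open Language

theorem IsLeftComet.exists_ne_nil_append_mem {L : Language α} (hL : IsLeftComet L)
    {w : List α} (hw : w ∈ L) : ∃ g ≠ [], w ++ g ∈ L := by
  obtain ⟨E, G, -, -, hG0, hG1, rfl⟩ := hL
  obtain ⟨e, he, s, hs, rfl⟩ := hw
  obtain ⟨g, hg, hg_ne⟩ := exists_mem_ne_nil hG0 hG1
  refine ⟨g, hg_ne, ?_⟩
  rw [List.append_assoc]
  exact append_mem_mul he ((kstar_mul_le_kstar : G∗ * G ≤ G∗) (append_mem_mul hs hg))

theorem IsRightComet.exists_ne_nil_append_mem {L : Language α} (hL : IsRightComet L)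
    {w : List α} (hw : w ∈ L) : ∃ g ≠ [], g ++ w ∈ L := by
  obtain ⟨G, H, -, -, hG0, hG1, rfl⟩ := hL
  obtain ⟨s, hs, h, hh, rfl⟩ := hw
  obtain ⟨g, hg, hg_ne⟩ := exists_mem_ne_nil hG0 hG1
  refine ⟨g, hg_ne, ?_⟩
  rw [← List.append_assoc]
  exact append_mem_mul ((mul_kstar_le_kstar : G * G∗ ≤ G∗) (append_mem_mul hg hs)) hh

theorem anb_eq_kstar_mul (a b : α) : anb a b = ({[a]} : Language α)∗ * {[b]} := by
  ext w
  constructor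
  · rintro ⟨n, rfl⟩
    exact append_mem_mul (mem_kstar_singleton_char.mpr ⟨n, rfl⟩) rfl
  · rintro ⟨u, hu, v, rfl, rfl⟩
    obtain ⟨n, rfl⟩ := mem_kstar_singleton_char.mp hu
    exact ⟨n, rfl⟩

theorem ban_eq_mul_kstar (a b : α) : ban a b = {[b]} * ({[a]} : Language α)∗ := by
  ext w
  constructor
  · rintro ⟨n, rfl⟩
    exact append_mem_mul (Set.mem_singleton [b]) (mem_kstar_singleton_char.mpr ⟨n, rfl⟩)
  · rintro ⟨u, rfl, v, hv, rfl⟩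
    obtain ⟨n, rfl⟩ := mem_kstar_singleton_char.mp hv
    exact ⟨n, rfl⟩

theorem anb_isRightComet (a b : α) : IsRightComet (anb a b) :=
  ⟨{[a]}, {[b]}, isRegular_singleton _, isRegular_singleton _, singleton_ne_zero _,
    singleton_ne_one (List.cons_ne_nil a []), anb_eq_kstar_mul a b⟩

theorem ban_isLeftComet (a b : α) : IsLeftComet (ban a b) :=
  ⟨{[b]}, {[a]}, isRegular_singleton _, isRegular_singleton _, singleton_ne_zero _,
    singleton_ne_one (List.cons_ne_nil a []), ban_eq_mul_kstar a b⟩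

theorem anb_not_isLeftComet {a b : α} (hab : a ≠ b) : ¬ IsLeftComet (anb a b) := by
  intro hL
  obtain ⟨g, hg_ne, n, hn⟩ := hL.exists_ne_nil_append_mem (w := [b]) ⟨0, rfl⟩
  cases n with
  | zero => exact hg_ne (by simpa using hn)
  | succ n => exact hab (List.cons.inj hn).1.symm

theorem ban_not_isRightComet {a b : α} (hab : a ≠ b) : ¬ IsRightComet (ban a b) := by
  intro hL
  obtain ⟨g, hg_ne, n, hn⟩ := hL.exists_ne_nil_append_mem (w := [b]) ⟨0, rfl⟩
  cases n with
  | zero => exact hg_ne (by simpa using hn)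
  | succ n =>
    rw [List.replicate_succ', ← List.cons_append] at hn
    exact hab (List.singleton_inj.mp (List.append_inj' hn rfl).2).symm

theorem anb_rightComet_not_leftComet_general (a b : α) (hab : a ≠ b) :
    IsRightComet (anb a b) ∧ ¬ IsLeftComet (anb a b) ∧
    IsLeftComet (ban a b) ∧ ¬ IsRightComet (ban a b) :=
  ⟨anb_isRightComet a b, anb_not_isLeftComet hab, ban_isLeftComet a b, ban_not_isRightComet hab⟩

/-- `{aⁿb}` is a right-sided but not a left-sided comet; its reversal `{baⁿ}`
is a left-sided but not a right-sided comet. -/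
theorem anb_rightComet_not_leftComet [Fintype α] (a b : α) (hab : a ≠ b) :
    IsRightComet (anb a b) ∧ ¬ IsLeftComet (anb a b) ∧
    IsLeftComet (ban a b) ∧ ¬ IsRightComet (ban a b) :=
  anb_rightComet_not_leftComet_general a b hab
end

section
/- Let α be a finite alphabet consisting of exactly three pairwise distinct letters a, b, c. Then each of the families of star languages and of union-free languages over α is incomparable to each of the families of combinational, symmetric definite, left-sided comet, right-sided comet, and two-sided comet languages over α. -/
open Language Computability

universe u

variable {α : Type}

section AuxProofs

open Language

lemma regular_top' : (⊤ : Language α).IsRegular :=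
  ⟨Unit, inferInstance, ⟨fun _ _ => (), (), Set.univ⟩, by
    ext w; simp [DFA.mem_accepts]; trivial⟩

lemma regular_zero' : (0 : Language α).IsRegular :=
  ⟨Unit, inferInstance, ⟨fun _ _ => (), (), ∅⟩, by ext w; simp [DFA.mem_accepts]⟩

def oneDFA (α : Type) : DFA α Bool := ⟨fun _ _ => true, false, {false}⟩

lemma oneDFA_true (l : List α) : (oneDFA α).evalFrom true l = true := by
  induction l with
  | nil => rfl
  | cons x l ih => simpa [DFA.evalFrom, oneDFA] using ih

lemma regular_one' : (1 : Language α).IsRegular := by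
  refine ⟨Bool, inferInstance, oneDFA α, ?_⟩
  ext w
  cases w with
  | nil =>
      simp only [DFA.mem_accepts, DFA.eval, DFA.evalFrom, List.foldl_nil]
      simp [oneDFA, Language.nil_mem_one]
  | cons x l =>
      have h : (oneDFA α).eval (x :: l) = true := oneDFA_true l
      rw [DFA.mem_accepts, h]
      constructor
      · intro hmem; simp [oneDFA] at hmem
      · intro hmem; exact absurd ((Language.mem_one _).mp hmem) (List.cons_ne_nil _ _)

open Classical in
noncomputable def lettersDFA (X : Set α) : DFA α (Fin 3) :=
  ⟨fun q x => if q = 0 ∧ x ∈ X then 1 else 2, 0, {1}⟩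

lemma lettersDFA_step_ne (X : Set α) (q : Fin 3) (x : α) : (lettersDFA X).step q x ≠ 0 := by
  simp only [lettersDFA]; split <;> simp

lemma lettersDFA_step_two (X : Set α) (q : Fin 3) (hq : q ≠ 0) (x : α) :
    (lettersDFA X).step q x = 2 := by
  simp [lettersDFA, hq]

lemma lettersDFA_evalFrom_two (X : Set α) (l : List α) :
    (lettersDFA X).evalFrom 2 l = 2 := by
  induction l with
  | nil => rfl
  | cons x l ih =>
      have h : (lettersDFA X).evalFrom 2 (x :: l)
          = (lettersDFA X).evalFrom ((lettersDFA X).step 2 x) l := rfl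
      rw [h, lettersDFA_step_two X 2 (by decide) x, ih]

lemma regular_letters' (X : Set α) : (lettersLang X).IsRegular := by
  refine ⟨Fin 3, inferInstance, lettersDFA X, ?_⟩
  ext w
  rw [DFA.mem_accepts]
  cases w with
  | nil =>
      constructor
      · intro h
        exact absurd h (by simp [DFA.eval, DFA.evalFrom, lettersDFA])
      · rintro ⟨a, _, h⟩; cases h
  | cons x l =>
      cases l with
      | nil =>
          have he : (lettersDFA X).eval [x] = (lettersDFA X).step 0 x := rfl
          rw [he]
          by_cases hx : x ∈ X
          · constructor
            · intro _; exact ⟨x, hx, rfl⟩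
            · intro _; simp [lettersDFA, hx]
          · constructor
            · intro h
              exact absurd h (by simp [lettersDFA, hx])
            · rintro ⟨a, ha, h⟩
              injection h with h1
              exact absurd (h1 ▸ ha) hx
      | cons y l' =>
          have he : (lettersDFA X).eval (x :: y :: l') =
              (lettersDFA X).evalFrom ((lettersDFA X).step ((lettersDFA X).step 0 x) y) l' := rfl
          have h2 : (lettersDFA X).step ((lettersDFA X).step 0 x) y = 2 :=
            lettersDFA_step_two X _ (lettersDFA_step_ne X 0 x) y
          rw [he, h2, lettersDFA_evalFrom_two]
          constructor
          · intro h; simp [lettersDFA] at h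
          · rintro ⟨a, _, h⟩
            injection h with h1 h2
            cases h2

lemma letters_ne_nil {X : Set α} {v : List α} (hv : v ∈ lettersLang X) : v ≠ [] := by
  obtain ⟨x, _, rfl⟩ := hv; simp

lemma mem_letters {X : Set α} {x : α} (hx : x ∈ X) : [x] ∈ lettersLang X := ⟨x, hx, rfl⟩

/-- Skeleton lemma for union-free regular expressions. -/
lemma unionFree_skeleton :
    ∀ r : RegularExpression α, r.UnionFree →
      (∀ w, w ∉ r.matches') ∨ ∃ w₀ ∈ r.matches', ∀ w ∈ r.matches', List.Sublist w₀ w := by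
  intro r
  induction r with
  | zero => intro _; left; intro w; exact Language.notMem_zero w
  | epsilon => intro h; exact h.elim
  | char x =>
      intro _; right
      refine ⟨[x], rfl, ?_⟩
      intro w hw
      have : w = [x] := hw
      rw [this]
  | plus r s ihr ihs => intro h; exact h.elim
  | comp r s ihr ihs =>
      intro h
      obtain ⟨h1, h2⟩ := h
      have hm : (RegularExpression.comp r s).matches' = r.matches' * s.matches' := rfl
      rcases ihr h1 with hr | ⟨u₀, hu₀, hu⟩
      · left; intro w hw
        rw [hm] at hw
        obtain ⟨u, hu, v, hv, huv⟩ := Language.mem_mul.mp hw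
        exact hr u hu
      · rcases ihs h2 with hs | ⟨v₀, hv₀, hv⟩
        · left; intro w hw
          rw [hm] at hw
          obtain ⟨u, hu', v, hv', huv⟩ := Language.mem_mul.mp hw
          exact hs v hv'
        · right
          refine ⟨u₀ ++ v₀, ?_, ?_⟩
          · rw [hm]; exact Language.append_mem_mul hu₀ hv₀
          · intro w hw
            rw [hm] at hw
            obtain ⟨u, hu', v, hv', huv⟩ := Language.mem_mul.mp hw
            rw [← huv]
            exact List.Sublist.append (hu u hu') (hv v hv')
  | star r ih =>
      intro h; right
      have hm : (RegularExpression.star r).matches' = r.matches'∗ := rfl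
      refine ⟨[], ?_, fun w _ => List.nil_sublist w⟩
      rw [hm]; exact Language.nil_mem_kstar _

lemma unionFree_nil_mem {L : Language α} (h : IsUnionFree L) {x y : α} (hxy : x ≠ y)
    (hx : [x] ∈ L) (hy : [y] ∈ L) : [] ∈ L := by
  obtain ⟨r, hr, rfl⟩ := h
  rcases unionFree_skeleton r hr with hemp | ⟨w₀, hw₀, hsub⟩
  · exact absurd hx (hemp [x])
  · rcases List.sublist_singleton.mp (hsub [x] hx) with h0 | h0
    · rwa [← h0]
    · rcases List.sublist_singleton.mp (hsub [y] hy) with h1 | h1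
      · rwa [← h1]
      · rw [h0] at h1
        injection h1 with h2
        exact absurd h2 hxy

lemma star_nil_mem {L : Language α} (h : IsStarLang L) : [] ∈ L := by
  obtain ⟨H, _, rfl⟩ := h
  exact Language.nil_mem_kstar _

lemma star_one' : IsStarLang (1 : Language α) :=
  ⟨0, regular_zero', kstar_zero.symm⟩

lemma uf_one' : IsUnionFree (1 : Language α) := by
  refine ⟨RegularExpression.star RegularExpression.zero, trivial, ?_⟩
  have : (RegularExpression.star (RegularExpression.zero : RegularExpression α)).matches'
      = (0 : Language α)∗ := rfl
  rw [this, kstar_zero]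

lemma no_nil_right {L : Language α} {X : Set α} : [] ∉ L * lettersLang X := by
  intro h
  obtain ⟨u, _, v, hv, huv⟩ := Language.mem_mul.mp h
  exact letters_ne_nil hv (List.append_eq_nil_iff.mp huv).2

lemma no_nil_left {L : Language α} {X : Set α} : [] ∉ lettersLang X * L := by
  intro h
  obtain ⟨u, hu, v, _, huv⟩ := Language.mem_mul.mp h
  exact letters_ne_nil hu (List.append_eq_nil_iff.mp huv).1

lemma letters_G_ne_zero (x : α) : lettersLang ({x} : Set α) ≠ 0 := fun h =>
  Language.notMem_zero [x] (h ▸ mem_letters rfl)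

lemma letters_G_ne_one (x : α) : lettersLang ({x} : Set α) ≠ 1 := fun h =>
  List.cons_ne_nil x [] ((Language.mem_one _).mp (h ▸ mem_letters rfl))

lemma not_comb_one (x : α) : ¬ IsCombinational (1 : Language α) := by
  rintro ⟨X, hX⟩
  have h0 : [] ∈ (⊤ : Language α) * lettersLang X := by
    rw [← hX]; exact Language.nil_mem_one
  exact no_nil_right h0

lemma not_symdef_one (x : α) : ¬ IsSymDef (1 : Language α) := by
  rintro ⟨E, H, _, _, hEH⟩
  have h0 : [] ∈ E * (⊤ : Language α) * H := by rw [← hEH]; exact Language.nil_mem_one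
  obtain ⟨u, hu, h', hh, huh⟩ := Language.mem_mul.mp h0
  obtain ⟨e, he, t, _, het⟩ := Language.mem_mul.mp hu
  obtain ⟨hu0, hh0⟩ := List.append_eq_nil_iff.mp huh
  obtain ⟨he0, _⟩ := List.append_eq_nil_iff.mp (het.trans hu0)
  have hx : [x] ∈ E * (⊤ : Language α) * H := by
    have h1 : ([] : List α) ++ [x] ∈ E * (⊤ : Language α) :=
      Language.append_mem_mul (he0 ▸ he) trivial
    have h2 : (([] : List α) ++ [x]) ++ [] ∈ E * (⊤ : Language α) * H :=
      Language.append_mem_mul h1 (hh0 ▸ hh)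
    simpa using h2
  rw [← hEH] at hx
  exact List.cons_ne_nil x [] ((Language.mem_one _).mp hx)

lemma sub_singleton_nil {G : Language α} (hne : G ≠ 0) (h : ∀ g ∈ G, g = []) : G = 1 := by
  ext w
  rw [Language.mem_one]
  constructor
  · exact h w
  · rintro rfl
    rcases Set.eq_empty_or_nonempty (G : Set (List α)) with he | ⟨g, hg⟩
    · exact absurd he hne
    · have := h g hg
      rwa [this] at hg

lemma not_lcom_one (x : α) : ¬ IsLeftComet (1 : Language α) := by
  rintro ⟨E, G, _, _, hG0, hG1, hEG⟩
  have h0 : [] ∈ E * G∗ := by rw [← hEG]; exact Language.nil_mem_one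
  obtain ⟨u, hu, v, _, huv⟩ := Language.mem_mul.mp h0
  have hu0 : u = [] := (List.append_eq_nil_iff.mp huv).1
  refine hG1 (sub_singleton_nil hG0 fun g hg => ?_)
  have hmem : ([] : List α) ++ g ∈ E * G∗ := by
    refine Language.append_mem_mul (hu0 ▸ hu) ?_
    have : [g].flatten ∈ G∗ := Language.join_mem_kstar (by simpa using hg)
    simpa using this
  rw [← hEG] at hmem
  simpa using (Language.mem_one _).mp hmem

lemma not_rcom_one (x : α) : ¬ IsRightComet (1 : Language α) := by
  rintro ⟨G, H, _, _, hG0, hG1, hGH⟩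
  have h0 : [] ∈ G∗ * H := by rw [← hGH]; exact Language.nil_mem_one
  obtain ⟨u, _, v, hv, huv⟩ := Language.mem_mul.mp h0
  have hv0 : v = [] := (List.append_eq_nil_iff.mp huv).2
  refine hG1 (sub_singleton_nil hG0 fun g hg => ?_)
  have hmem : g ++ ([] : List α) ∈ G∗ * H := by
    refine Language.append_mem_mul ?_ (hv0 ▸ hv)
    have : [g].flatten ∈ G∗ := Language.join_mem_kstar (by simpa using hg)
    simpa using this
  rw [← hGH] at hmem
  simpa using (Language.mem_one _).mp hmem

lemma not_2com_one (x : α) : ¬ IsTwoComet (1 : Language α) := by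
  rintro ⟨E, G, H, _, _, _, hG0, hG1, hEGH⟩
  have h0 : [] ∈ E * G∗ * H := by rw [← hEGH]; exact Language.nil_mem_one
  obtain ⟨u, hu, h', hh, huh⟩ := Language.mem_mul.mp h0
  obtain ⟨e, he, t, _, het⟩ := Language.mem_mul.mp hu
  obtain ⟨hu0, hh0⟩ := List.append_eq_nil_iff.mp huh
  obtain ⟨he0, _⟩ := List.append_eq_nil_iff.mp (het.trans hu0)
  refine hG1 (sub_singleton_nil hG0 fun g hg => ?_)
  have hg' : [g].flatten ∈ G∗ := Language.join_mem_kstar (by simpa using hg)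
  have h1 : ([] : List α) ++ g ∈ E * G∗ :=
    Language.append_mem_mul (he0 ▸ he) (by simpa using hg')
  have hmem : (([] : List α) ++ g) ++ [] ∈ E * G∗ * H :=
    Language.append_mem_mul h1 (hh0 ▸ hh)
  rw [← hEGH] at hmem
  simpa using (Language.mem_one _).mp hmem

end AuxProofs

/-- Over a three-letter alphabet, `STAR` and `UF` are each incomparable to each of
`COMB`, `SYDEF`, `LCOM`, `RCOM`, and `2COM`. -/
theorem star_unionFree_incomparable_comets [Fintype α] (a b c : α)
    (hab : a ≠ b) (hac : a ≠ c) (hbc : b ≠ c)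
    (hall : ∀ d : α, d = a ∨ d = b ∨ d = c) :
    ∀ P ∈ ([IsStarLang, IsUnionFree] : List (Language α → Prop)),
    ∀ Q ∈ ([IsCombinational, IsSymDef, IsLeftComet, IsRightComet, IsTwoComet] :
      List (Language α → Prop)),
    Incomparable P Q := by
  classical
  -- witness languages
  set W1 : Language α := (⊤ : Language α) * lettersLang {a, b} with hW1
  set W2 : Language α := (1 : Language α) * (⊤ : Language α) * lettersLang {a, b} with hW2
  set W3 : Language α := lettersLang {a, b} * (lettersLang ({a} : Set α))∗ with hW3
  set W4 : Language α := (lettersLang ({a} : Set α))∗ * lettersLang {a, b} with hW4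
  set W5 : Language α :=
    (1 : Language α) * (lettersLang ({a} : Set α))∗ * lettersLang {a, b} with hW5
  have haab : a ∈ ({a, b} : Set α) := Set.mem_insert a {b}
  have hbab : b ∈ ({a, b} : Set α) := Set.mem_insert_of_mem a rfl
  -- memberships
  have hW1a : ∀ x ∈ ({a, b} : Set α), [x] ∈ W1 := fun x hx => by
    have : ([] : List α) ++ [x] ∈ W1 := Language.append_mem_mul trivial (mem_letters hx)
    simpa using this
  have hW2a : ∀ x ∈ ({a, b} : Set α), [x] ∈ W2 := fun x hx => by
    have h1 : ([] : List α) ++ [] ∈ (1 : Language α) * (⊤ : Language α) :=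
      Language.append_mem_mul Language.nil_mem_one trivial
    have : (([] : List α) ++ []) ++ [x] ∈ W2 :=
      Language.append_mem_mul h1 (mem_letters hx)
    simpa using this
  have hW3a : ∀ x ∈ ({a, b} : Set α), [x] ∈ W3 := fun x hx => by
    have : [x] ++ ([] : List α) ∈ W3 :=
      Language.append_mem_mul (mem_letters hx) (Language.nil_mem_kstar _)
    simpa using this
  have hW4a : ∀ x ∈ ({a, b} : Set α), [x] ∈ W4 := fun x hx => by
    have : ([] : List α) ++ [x] ∈ W4 :=
      Language.append_mem_mul (Language.nil_mem_kstar _) (mem_letters hx)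
    simpa using this
  have hW5a : ∀ x ∈ ({a, b} : Set α), [x] ∈ W5 := fun x hx => by
    have h1 : ([] : List α) ++ [] ∈ (1 : Language α) * (lettersLang ({a} : Set α))∗ :=
      Language.append_mem_mul Language.nil_mem_one (Language.nil_mem_kstar _)
    have : (([] : List α) ++ []) ++ [x] ∈ W5 :=
      Language.append_mem_mul h1 (mem_letters hx)
    simpa using this
  have hW1n : [] ∉ W1 := no_nil_right
  have hW2n : [] ∉ W2 := no_nil_right
  have hW3n : [] ∉ W3 := no_nil_left
  have hW4n : [] ∉ W4 := no_nil_right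
  have hW5n : [] ∉ W5 := no_nil_right
  -- Q-structure of witnesses
  have hQ1 : IsCombinational W1 := ⟨{a, b}, rfl⟩
  have hQ2 : IsSymDef W2 :=
    ⟨1, lettersLang {a, b}, regular_one', regular_letters' _, rfl⟩
  have hQ3 : IsLeftComet W3 :=
    ⟨lettersLang {a, b}, lettersLang ({a} : Set α), regular_letters' _, regular_letters' _,
      letters_G_ne_zero a, letters_G_ne_one a, rfl⟩
  have hQ4 : IsRightComet W4 :=
    ⟨lettersLang ({a} : Set α), lettersLang {a, b}, regular_letters' _, regular_letters' _,
      letters_G_ne_zero a, letters_G_ne_one a, rfl⟩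
  have hQ5 : IsTwoComet W5 :=
    ⟨1, lettersLang ({a} : Set α), lettersLang {a, b}, regular_one', regular_letters' _,
      regular_letters' _, letters_G_ne_zero a, letters_G_ne_one a, rfl⟩
  -- neither star nor union-free
  have notP : ∀ W : Language α, (∀ x ∈ ({a, b} : Set α), [x] ∈ W) → [] ∉ W →
      ¬ IsStarLang W ∧ ¬ IsUnionFree W := by
    intro W hmem hnil
    constructor
    · intro h; exact hnil (star_nil_mem h)
    · intro h; exact hnil (unionFree_nil_mem h hab (hmem a haab) (hmem b hbab))
  have hP1 := notP W1 hW1a hW1n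
  have hP2 := notP W2 hW2a hW2n
  have hP3 := notP W3 hW3a hW3n
  have hP4 := notP W4 hW4a hW4n
  have hP5 := notP W5 hW5a hW5n
  intro P hP Q hQ
  simp only [List.mem_cons, List.mem_singleton, List.not_mem_nil, or_false] at hP hQ
  rcases hP with rfl | rfl <;>
    rcases hQ with rfl | rfl | rfl | rfl | rfl
  · exact ⟨⟨1, star_one', not_comb_one a⟩, ⟨W1, hQ1, hP1.1⟩⟩
  · exact ⟨⟨1, star_one', not_symdef_one a⟩, ⟨W2, hQ2, hP2.1⟩⟩
  · exact ⟨⟨1, star_one', not_lcom_one a⟩, ⟨W3, hQ3, hP3.1⟩⟩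
  · exact ⟨⟨1, star_one', not_rcom_one a⟩, ⟨W4, hQ4, hP4.1⟩⟩
  · exact ⟨⟨1, star_one', not_2com_one a⟩, ⟨W5, hQ5, hP5.1⟩⟩
  · exact ⟨⟨1, uf_one', not_comb_one a⟩, ⟨W1, hQ1, hP1.2⟩⟩
  · exact ⟨⟨1, uf_one', not_symdef_one a⟩, ⟨W2, hQ2, hP2.2⟩⟩
  · exact ⟨⟨1, uf_one', not_lcom_one a⟩, ⟨W3, hQ3, hP3.2⟩⟩
  · exact ⟨⟨1, uf_one', not_rcom_one a⟩, ⟨W4, hQ4, hP4.2⟩⟩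
  · exact ⟨⟨1, uf_one', not_2com_one a⟩, ⟨W5, hQ5, hP5.2⟩⟩
end

section
/- Let α be a nonempty finite alphabet. Then the family of star languages over α is incomparable to each of the following families of languages over α: the finite languages, the nilpotent languages, the definite languages, the ordered languages, the non-counting languages, the power-separating languages, and the suffix-closed languages. -/
open Language Computability

universe u

variable {α : Type}

/-!
For a letter `a`, the star language `(aa)∗` lies in none of the seven families. It is infinite
and coinfinite, and it is not suffix-closed since it contains `aa` but not `a`. Membership of `aⁿ`
in it alternates with `n`, whereas an ordered, non-counting or power-separating language treats
`aⁿ` and `aⁿ⁺¹` alike for some `n`, and an infinite definite language contains some `w` together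
with `a w`. Conversely the empty language belongs to all seven families but is not a star
language, since every star language contains the empty word.
-/

theorem Language.isRegular_singleton_s16 {T : Type*} (w : List T) : ({w} : Language T).IsRegular := by
  refine .of_finite_range_leftQuotient <|
    ((w.tails.finite_toSet.image fun v => ({v} : Language T)).insert 0).subset ?_
  rintro _ ⟨x, rfl⟩
  by_cases hx : ∃ y, x ++ y = w
  · obtain ⟨y, rfl⟩ := hx
    refine Or.inr ⟨y, (List.mem_tails _ _).2 (List.suffix_append x y), ?_⟩
    ext z
    exact ⟨fun h : z = y => h ▸ rfl, fun h : x ++ z = x ++ y => List.append_cancel_left h⟩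
  · exact Or.inl (Set.eq_empty_of_forall_notMem fun y hy => hx ⟨y, hy⟩)

theorem Language.isRegular_zero {T : Type*} : (0 : Language T).IsRegular :=
  .of_finite_range_leftQuotient <| (Set.finite_singleton 0).subset <| by
    rintro _ ⟨x, rfl⟩
    exact Set.eq_empty_of_forall_notMem fun y hy => hy

theorem Monotone.exists_forall_iterate_eq {σ : Type*} [Finite σ] [LinearOrder σ] {f : σ → σ}
    (hf : Monotone f) (q : σ) : ∃ N, ∀ n, N ≤ n → f^[N] q = f^[n] q := by
  rcases le_total q (f q) with h | h
  · exact WellFoundedGT.monotone_chain_condition ⟨_, hf.monotone_iterate_of_le_map h⟩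
  · exact WellFoundedLT.antitone_chain_condition (hf.antitone_iterate_of_map_le h)

theorem DFA.evalFrom_replicate {σ : Type*} (M : DFA α σ) (a : α) (n : ℕ) (q : σ) :
    M.evalFrom q (List.replicate n a) = (M.step · a)^[n] q := by
  induction n generalizing q with
  | zero => rfl
  | succ n ih => exact ih (M.step q a)

theorem wordPow_singleton (a : α) (n : ℕ) : wordPow [a] n = List.replicate n a := by
  induction n with
  | zero => rfl
  | succ n ih => simp [wordPow, ih, List.replicate_succ]

theorem not_isStarLang_zero : ¬ IsStarLang (0 : Language α) := by
  rintro ⟨H, -, hH⟩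
  exact Language.notMem_zero [] (hH ▸ H.nil_mem_kstar)

def evenPowers (a : α) : Language α := ({[a, a]} : Language α)∗

theorem isStarLang_evenPowers (a : α) : IsStarLang (evenPowers a) :=
  ⟨_, Language.isRegular_singleton_s16 _, rfl⟩

theorem even_length_of_mem_evenPowers {a : α} {w : List α} (hw : w ∈ evenPowers a) :
    Even w.length := by
  rw [evenPowers, Language.mem_kstar] at hw
  obtain ⟨ws, rfl, hws⟩ := hw
  induction ws with
  | nil => simp
  | cons v ws ih =>
    rw [show v = [a, a] from hws v List.mem_cons_self, List.flatten_cons, List.length_append]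
    exact even_two.add (ih fun u hu => hws u (List.mem_cons_of_mem _ hu))

theorem replicate_mem_evenPowers_iff (a : α) (n : ℕ) :
    List.replicate n a ∈ evenPowers a ↔ Even n := by
  refine ⟨fun h => by simpa using even_length_of_mem_evenPowers h, ?_⟩
  rintro ⟨k, rfl⟩
  rw [← two_mul, mul_comm, ← List.flatten_replicate_replicate]
  exact Language.join_mem_kstar fun v hv => List.eq_of_mem_replicate hv

theorem replicate_succ_mem_evenPowers_iff (a : α) (n : ℕ) :
    List.replicate (n + 1) a ∈ evenPowers a ↔ List.replicate n a ∉ evenPowers a := by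
  simp only [replicate_mem_evenPowers_iff, Nat.even_add_one]

theorem not_exists_replicate_mem_evenPowers_iff_succ (a : α) :
    ¬ ∃ n, (List.replicate n a ∈ evenPowers a ↔ List.replicate (n + 1) a ∈ evenPowers a) :=
  fun ⟨n, h⟩ => iff_not_self (h.trans (replicate_succ_mem_evenPowers_iff a n))

theorem evenPowers_infinite (a : α) : (evenPowers a).Infinite :=
  Set.infinite_of_injective_forall_mem (f := fun n => List.replicate (2 * n) a)
    (fun m n h => by simpa using congrArg List.length h)
    (fun n => (replicate_mem_evenPowers_iff a _).2 (even_two_mul n))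

theorem evenPowers_compl_infinite (a : α) : (evenPowers a)ᶜ.Infinite :=
  Set.infinite_of_injective_forall_mem (f := fun n => List.replicate (2 * n + 1) a)
    (fun m n h => by simpa using congrArg List.length h)
    (fun n h => (replicate_succ_mem_evenPowers_iff a (2 * n)).1 h <|
      (replicate_mem_evenPowers_iff a _).2 (even_two_mul n))

theorem IsDefinite.exists_cons_mem {L : Language α} (hL : IsDefinite L) (hinf : L.Infinite)
    (a : α) : ∃ w ∈ L, a :: w ∈ L := by
  obtain ⟨A, B, hA, -, rfl⟩ := hL
  obtain ⟨w, hwL, hwA⟩ := (hinf.sdiff hA).nonempty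
  have hwB : w ∈ ⊤ * B := ((Language.mem_add _ _ _).1 hwL).resolve_left hwA
  obtain ⟨u, -, v, hv, rfl⟩ := Language.mem_mul.1 hwB
  have hawB : (a :: u) ++ v ∈ ⊤ * B := Language.append_mem_mul (Set.mem_univ _) hv
  exact ⟨u ++ v, hwL, (Language.mem_add _ _ _).2 (.inr hawB)⟩

theorem IsOrdered.exists_forall_replicate_mem_iff {L : Language α} (hL : IsOrdered L) (a : α) :
    ∃ N, ∀ n, N ≤ n → (List.replicate n a ∈ L ↔ List.replicate N a ∈ L) := by
  obtain ⟨σ, _, _, M, hmono, rfl⟩ := hL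
  obtain ⟨N, hN⟩ := (hmono a).exists_forall_iterate_eq M.start
  refine ⟨N, fun n hn => ?_⟩
  simp only [DFA.mem_accepts, DFA.eval, DFA.evalFrom_replicate, hN n hn]

theorem HasNonCounting.exists_replicate_mem_iff_succ {L : Language α} (hL : HasNonCounting L)
    (a : α) : ∃ n, (List.replicate n a ∈ L ↔ List.replicate (n + 1) a ∈ L) := by
  obtain ⟨k, -, hk⟩ := hL
  refine ⟨k, ?_⟩
  simpa [wordPow_singleton] using hk [] [a] []

theorem HasPowerSep.exists_replicate_mem_iff_succ {L : Language α} (hL : HasPowerSep L)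
    (a : α) : ∃ n, (List.replicate n a ∈ L ↔ List.replicate (n + 1) a ∈ L) := by
  obtain ⟨m, -, hm⟩ := hL
  refine ⟨m, ?_⟩
  rcases hm [a] with h | h <;> simp only [← wordPow_singleton]
  · exact iff_of_false (h m le_rfl) (h (m + 1) m.le_succ)
  · exact iff_of_true (h m le_rfl) (h (m + 1) m.le_succ)

theorem not_isDefinite_evenPowers (a : α) : ¬ IsDefinite (evenPowers a) := fun h =>
  let ⟨_, hw, haw⟩ := h.exists_cons_mem (evenPowers_infinite a) a
  Nat.even_add_one.1 (even_length_of_mem_evenPowers haw) (even_length_of_mem_evenPowers hw)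

theorem not_isOrdered_evenPowers (a : α) : ¬ IsOrdered (evenPowers a) := fun h =>
  let ⟨N, hN⟩ := h.exists_forall_replicate_mem_iff a
  not_exists_replicate_mem_evenPowers_iff_succ a ⟨N, (hN (N + 1) N.le_succ).symm⟩

theorem not_isSuffixClosed_evenPowers (a : α) : ¬ IsSuffixClosed (evenPowers a) := fun h =>
  (replicate_mem_evenPowers_iff a 1).not.2 Nat.not_even_one <|
    h.2 [a] [a] ((replicate_mem_evenPowers_iff a 2).2 even_two)

theorem isOrdered_zero : IsOrdered (0 : Language α) :=
  ⟨Unit, inferInstance, inferInstance, ⟨fun _ _ => (), (), ∅⟩, fun _ => monotone_const,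
    Set.eq_empty_of_forall_notMem fun _ h => h⟩

theorem isNonCounting_zero : IsNonCounting (0 : Language α) :=
  ⟨Language.isRegular_zero, 1, le_rfl, fun _ _ _ => iff_of_false (Language.notMem_zero _)
    (Language.notMem_zero _)⟩

theorem isPowerSep_zero : IsPowerSep (0 : Language α) :=
  ⟨Language.isRegular_zero, 1, le_rfl, fun _ => .inl fun _ _ => Language.notMem_zero _⟩

theorem isSuffixClosed_zero : IsSuffixClosed (0 : Language α) :=
  ⟨Language.isRegular_zero, fun _ _ h => (Language.notMem_zero _ h).elim⟩

theorem incomparable_isStarLang_of_evenPowers {Q : Language α → Prop} (a : α)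
    (hQ : ¬ Q (evenPowers a)) (h0 : Q 0) : Incomparable IsStarLang Q :=
  ⟨⟨_, isStarLang_evenPowers a, hQ⟩, ⟨0, h0, not_isStarLang_zero⟩⟩

theorem star_incomparable_fin_nil_def_ord_nc_ps_suf_general [Nonempty α] :
    ∀ Q ∈ ([IsFiniteLang, IsNilpotentLang, IsDefinite, IsOrdered,
            IsNonCounting, IsPowerSep, IsSuffixClosed] : List (Language α → Prop)),
    Incomparable IsStarLang Q := by
  obtain ⟨a⟩ := ‹Nonempty α›
  simp only [List.mem_cons, List.not_mem_nil, or_false]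
  rintro Q (rfl | rfl | rfl | rfl | rfl | rfl | rfl) <;>
    refine incomparable_isStarLang_of_evenPowers a ?_ ?_
  · exact evenPowers_infinite a
  · exact Set.finite_empty
  · exact fun h => h.elim (evenPowers_infinite a) (evenPowers_compl_infinite a)
  · exact .inl Set.finite_empty
  · exact not_isDefinite_evenPowers a
  · exact ⟨0, 0, Set.finite_empty, Set.finite_empty, by simp⟩
  · exact not_isOrdered_evenPowers a
  · exact isOrdered_zero
  · exact fun h => not_exists_replicate_mem_evenPowers_iff_succ a
      (h.2.exists_replicate_mem_iff_succ a)
  · exact isNonCounting_zero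
  · exact fun h => not_exists_replicate_mem_evenPowers_iff_succ a
      (h.2.exists_replicate_mem_iff_succ a)
  · exact isPowerSep_zero
  · exact not_isSuffixClosed_evenPowers a
  · exact isSuffixClosed_zero

/-- Over a nonempty alphabet, `STAR` is incomparable to each of
`FIN`, `NIL`, `DEF`, `ORD`, `NC`, `PS`, and `SUF`. -/
theorem star_incomparable_fin_nil_def_ord_nc_ps_suf [Fintype α] [Nonempty α] :
    ∀ Q ∈ ([IsFiniteLang, IsNilpotentLang, IsDefinite, IsOrdered,
            IsNonCounting, IsPowerSep, IsSuffixClosed] : List (Language α → Prop)),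
    Incomparable IsStarLang Q :=
  star_incomparable_fin_nil_def_ord_nc_ps_suf_general
end
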